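/- arXiv:2506.22897 — 8 statements merged into one kernel-verified Lean document; each statement's English description precedes it below -/
import Mathlib

section
/- Let k be a field and f ∈ k[x] a nonzero polynomial of degree n, written over the algebraic closure as f = a_n ∏_{i=1}^s (x − r_i)^{m_i} with r_1, …, r_s distinct. For any α ∈ k with α ≠ 0, tol(f(αx)) = α^{n² − 2n + Σ_{i=1}^s m_i²} · tol(f(x)). -/
open Polynomial
open scoped Classical

noncomputable def tol {K : Type*} [Field K] (f : K[X]) : K :=
  f.leadingCoeff ^ (2 * (f.natDegree : ℤ) - 2) *
    ∏ p ∈ f.roots.toFinset.sym2.filter (fun p => ¬ p.IsDiag),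
      Sym2.lift ⟨fun a b => ((a - b) ^ 2) ^ (f.rootMultiplicity a * f.rootMultiplicity b),
        fun a b => by
          dsimp only
          rw [mul_comm (rootMultiplicity a f), show (a - b) ^ 2 = (b - a) ^ 2 by ring]⟩ p

section Aux

variable {K : Type*} [Field K] {s : ℕ}

lemma sym2_aux (r : Fin s → K) (m : Fin s → ℕ) :
    ∀ (i j : Fin s), ((r i - r j) ^ 2) ^ (m i * m j) = ((r j - r i) ^ 2) ^ (m j * m i) := by
  intro i j; rw [mul_comm, show (r i - r j)^2 = (r j - r i)^2 by ring]

lemma natDegree_aux (r : Fin s → K) (m : Fin s → ℕ) (a : K) (ha : a ≠ 0) :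
    (C a * ∏ i, (X - C (r i)) ^ m i).natDegree = ∑ i, m i := by
  rw [natDegree_C_mul ha, natDegree_prod _ _ (fun i _ => pow_ne_zero _ (X_sub_C_ne_zero _))]
  simp [natDegree_pow]

lemma roots_aux (r : Fin s → K) (m : Fin s → ℕ) (a : K) (ha : a ≠ 0) :
    (C a * ∏ i, (X - C (r i)) ^ m i).roots = ∑ i, (m i) • {r i} := by
  have hmonic : (∏ i, (X - C (r i)) ^ m i).Monic :=
    monic_prod_of_monic _ _ fun i _ => (monic_X_sub_C _).pow _
  rw [roots_C_mul _ ha, roots_prod _ _ hmonic.ne_zero]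
  simp only [roots_pow, roots_X_sub_C]
  simp [Finset.sum, Multiset.bind, Multiset.join, Multiset.sum]

lemma tol_eq (r : Fin s → K) (m : Fin s → ℕ)
    (hr : Function.Injective r) (hm : ∀ i, 0 < m i) (a : K) (ha : a ≠ 0) :
    tol (C a * ∏ i, (X - C (r i)) ^ m i) =
      a ^ (2 * ((∑ i, m i : ℕ) : ℤ) - 2) *
        ∏ p ∈ Finset.univ.sym2.filter (fun p => ¬ p.IsDiag),
          Sym2.lift ⟨fun i j => ((r i - r j) ^ 2) ^ (m i * m j), sym2_aux r m⟩ p := by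
  set F := C a * ∏ i, (X - C (r i)) ^ m i with hFdef
  have hmonic : (∏ i, (X - C (r i)) ^ m i).Monic :=
    monic_prod_of_monic _ _ fun i _ => (monic_X_sub_C _).pow _
  have hlc : F.leadingCoeff = a := by
    rw [hFdef, leadingCoeff_mul, leadingCoeff_C, hmonic.leadingCoeff, mul_one]
  have hroots : F.roots = ∑ i, (m i) • {r i} := roots_aux r m a ha
  have hmult : ∀ i, F.rootMultiplicity (r i) = m i := by
    intro i
    rw [← count_roots, hroots, Multiset.count_sum']
    rw [Finset.sum_eq_single i]
    · simp [Multiset.count_nsmul]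
    · intro j _ hj
      simp [Multiset.count_nsmul, Multiset.count_singleton, (hr.ne_iff).mpr (Ne.symm hj)]
    · simp
  have htoF : F.roots.toFinset = Finset.image r Finset.univ := by
    ext x
    simp only [Multiset.mem_toFinset, hroots, Finset.mem_image, Finset.mem_univ, true_and]
    rw [Multiset.mem_sum]
    constructor
    · rintro ⟨i, -, hi⟩
      rw [Multiset.mem_nsmul] at hi
      exact ⟨i, (Multiset.mem_singleton.1 hi.2).symm⟩
    · rintro ⟨i, rfl⟩
      exact ⟨i, Finset.mem_univ i, by rw [Multiset.mem_nsmul]; exact ⟨(hm i).ne', by simp⟩⟩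
  rw [tol, hlc, natDegree_aux r m a ha, htoF, Finset.sym2_image]
  have hfilt : (Finset.image (Sym2.map r) Finset.univ.sym2).filter (fun p => ¬ p.IsDiag)
      = Finset.image (Sym2.map r) (Finset.univ.sym2.filter (fun p => ¬ p.IsDiag)) := by
    rw [Finset.filter_image]
    congr 1
    ext p
    induction p using Sym2.ind with
    | _ i j => simp [Sym2.isDiag_map hr]
  rw [hfilt, Finset.prod_image (fun x _ y _ h => Sym2.map.injective hr h)]
  congr 1
  refine Finset.prod_congr rfl fun p _ => ?_
  induction p using Sym2.ind with
  | _ i j => simp [Sym2.lift_mk, hmult]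

end Aux

lemma tol_homothety_aux {K : Type*} [Field K] {s : ℕ} (r : Fin s → K) (m : Fin s → ℕ)
    (hr : Function.Injective r) (hm : ∀ i, 0 < m i) (a : K) (ha : a ≠ 0)
    (β : K) (hβ : β ≠ 0) (n : ℕ) (hn : ∑ i, m i = n) :
    tol (C (a * β ^ n) * ∏ i, (X - C (β⁻¹ * r i)) ^ m i) =
      β ^ ((n : ℤ) ^ 2 - 2 * (n : ℤ) + ∑ i, (m i : ℤ) ^ 2) *
        tol (C a * ∏ i, (X - C (r i)) ^ m i) := by
  have hβinv : Function.Injective (fun i => β⁻¹ * r i) :=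
    fun i j h => hr (mul_left_cancel₀ (inv_ne_zero hβ) h)
  rw [tol_eq (fun i => β⁻¹ * r i) m hβinv hm (a * β ^ n) (mul_ne_zero ha (pow_ne_zero _ hβ)),
    tol_eq r m hr hm a ha, hn]
  set pairs := Finset.univ.sym2.filter (fun p : Sym2 (Fin s) => ¬ p.IsDiag) with hpairs
  set E : Sym2 (Fin s) → ℕ := Sym2.lift ⟨fun i j => m i * m j, fun i j => mul_comm _ _⟩ with hE
  set P := ∏ p ∈ pairs, Sym2.lift ⟨fun i j => ((r i - r j) ^ 2) ^ (m i * m j), sym2_aux r m⟩ p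
    with hP
  set S := ∑ p ∈ pairs, E p with hSdef
  have hQ : ∏ p ∈ pairs,
      Sym2.lift ⟨fun i j => (((fun i => β⁻¹ * r i) i - (fun i => β⁻¹ * r i) j) ^ 2) ^ (m i * m j),
        sym2_aux (fun i => β⁻¹ * r i) m⟩ p = ((β⁻¹) ^ 2) ^ S * P := by
    rw [hSdef, ← Finset.prod_pow_eq_pow_sum, hP, ← Finset.prod_mul_distrib]
    refine Finset.prod_congr rfl fun p _ => ?_
    induction p using Sym2.ind with
    | _ i j =>
      simp only [Sym2.lift_mk, hE]
      rw [← mul_pow]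
      congr 1
      ring
  have hS : n * n = (∑ i, m i * m i) + 2 * S := by
    have hsym : S = ∑ x ∈ Finset.univ.offDiag.filter (fun x : Fin s × Fin s => x.1 < x.2),
        m x.1 * m x.2 := by
      have key := Finset.sum_sym2_filter_not_isDiag (Finset.univ : Finset (Fin s)) E
      rw [hSdef, hpairs]
      refine Eq.trans (Eq.trans ?_ key) ?_
      · exact Finset.sum_congr (by ext x; simp) fun _ _ => rfl
      · exact Finset.sum_congr (by ext x; simp) fun x hx => by obtain ⟨i, j⟩ := x; simp [hE, Sym2.lift_mk]
    have hswap : ∑ x ∈ Finset.univ.offDiag.filter (fun x : Fin s × Fin s => ¬ x.1 < x.2),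
        m x.1 * m x.2
        = ∑ x ∈ Finset.univ.offDiag.filter (fun x : Fin s × Fin s => x.1 < x.2),
        m x.1 * m x.2 := by
      refine Finset.sum_nbij' (fun x => Prod.swap x) (fun x => Prod.swap x) ?_ ?_ ?_ ?_ ?_
      · intro x hx
        simp only [Finset.mem_filter, Finset.mem_offDiag, Finset.mem_univ, true_and,
          Prod.fst_swap, Prod.snd_swap] at hx ⊢
        exact ⟨hx.1.symm, lt_of_le_of_ne (not_lt.1 hx.2) (Ne.symm hx.1)⟩
      · intro x hx
        simp only [Finset.mem_filter, Finset.mem_offDiag, Finset.mem_univ, true_and,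
          Prod.fst_swap, Prod.snd_swap] at hx ⊢
        exact ⟨hx.1.symm, not_lt.2 (le_of_lt hx.2)⟩
      · intro x _; rfl
      · intro x _; rfl
      · intro x _; exact mul_comm _ _
    have hoff : ∑ x ∈ Finset.univ.offDiag, m x.1 * m x.2 = 2 * S := by
      rw [← Finset.sum_filter_add_sum_filter_not Finset.univ.offDiag
        (fun x : Fin s × Fin s => x.1 < x.2), hswap, hsym, two_mul]
    calc n * n = (∑ i, m i) * (∑ i, m i) := by rw [hn]
      _ = ∑ x ∈ (Finset.univ ×ˢ Finset.univ : Finset (Fin s × Fin s)), m x.1 * m x.2 := by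
          rw [Finset.sum_mul_sum, ← Finset.sum_product']
      _ = (∑ i, m i * m i) + 2 * S := by
          rw [← Finset.diag_union_offDiag,
            Finset.sum_union (Finset.disjoint_diag_offDiag _), Finset.sum_diag, hoff]
  have hT : (2 * (S : ℤ)) = (n : ℤ) ^ 2 - ∑ i, (m i : ℤ) ^ 2 := by
    have h1 := congrArg (Nat.cast : ℕ → ℤ) hS
    push_cast at h1
    have e1 : ∑ i, (m i : ℤ) ^ 2 = ∑ i, (m i : ℤ) * (m i : ℤ) :=
      Finset.sum_congr rfl fun i _ => sq (m i : ℤ)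
    rw [e1]
    nlinarith [h1]
  have h1 : ((β⁻¹) ^ 2 : K) ^ S = β ^ (-(2 * (S : ℤ))) := by
    rw [← pow_mul, ← zpow_natCast β⁻¹, inv_zpow, ← zpow_neg]
    push_cast
    ring_nf
  have h2 : (a * β ^ n) ^ (2 * (n : ℤ) - 2) =
      a ^ (2 * (n : ℤ) - 2) * β ^ ((n : ℤ) * (2 * (n : ℤ) - 2)) := by
    rw [mul_zpow, ← zpow_natCast β n, ← zpow_mul]
  have hexp : (n : ℤ) * (2 * (n : ℤ) - 2) + (-(2 * (S : ℤ))) =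
      (n : ℤ) ^ 2 - 2 * (n : ℤ) + ∑ i, (m i : ℤ) ^ 2 := by
    rw [hT]; ring
  calc (a * β ^ n) ^ (2 * (n : ℤ) - 2) * ∏ p ∈ pairs,
        Sym2.lift ⟨fun i j =>
          (((fun i => β⁻¹ * r i) i - (fun i => β⁻¹ * r i) j) ^ 2) ^ (m i * m j),
          sym2_aux (fun i => β⁻¹ * r i) m⟩ p
      = a ^ (2 * (n : ℤ) - 2) * β ^ ((n : ℤ) * (2 * (n : ℤ) - 2)) *
          (β ^ (-(2 * (S : ℤ))) * P) := by rw [h2, hQ, h1]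
    _ = β ^ ((n : ℤ) * (2 * (n : ℤ) - 2) + (-(2 * (S : ℤ)))) * (a ^ (2 * (n : ℤ) - 2) * P) := by
        rw [zpow_add₀ hβ]; ring
    _ = β ^ ((n : ℤ) ^ 2 - 2 * (n : ℤ) + ∑ i, (m i : ℤ) ^ 2) *
          (a ^ (2 * (n : ℤ) - 2) * P) := by rw [hexp]

/-- Homothety invariance of the tolerant: if `f = a_n ∏_{i=1}^s (x - r_i)^{m_i}` over the
algebraic closure, with `r_1, …, r_s` distinct, then for `α ∈ k`, `α ≠ 0`,
`tol (f(αx)) = α^{n² - 2n + Σ m_i²} · tol (f(x))`. -/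
theorem tol_homothety {k : Type*} [Field k] (f : k[X]) (hf : f ≠ 0)
    (s : ℕ) (r : Fin s → AlgebraicClosure k) (m : Fin s → ℕ)
    (hr : Function.Injective r) (hm : ∀ i, 0 < m i)
    (hfact : f.map (algebraMap k (AlgebraicClosure k)) =
      C (algebraMap k (AlgebraicClosure k) f.leadingCoeff) * ∏ i, (X - C (r i)) ^ m i)
    (α : k) (hα : α ≠ 0) :
    tol ((f.comp (C α * X)).map (algebraMap k (AlgebraicClosure k))) =
      (algebraMap k (AlgebraicClosure k) α) ^
          ((f.natDegree : ℤ) ^ 2 - 2 * (f.natDegree : ℤ) + ∑ i, (m i : ℤ) ^ 2) *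
        tol (f.map (algebraMap k (AlgebraicClosure k))) := by
  have inj : Function.Injective (algebraMap k (AlgebraicClosure k)) :=
    RingHom.injective _
  have ha : algebraMap k (AlgebraicClosure k) f.leadingCoeff ≠ 0 :=
    fun h => leadingCoeff_ne_zero.mpr hf (inj (by simpa using h))
  have hβ : algebraMap k (AlgebraicClosure k) α ≠ 0 := fun h => hα (inj (by simpa using h))
  have hn : ∑ i, m i = f.natDegree := by
    have h1 := natDegree_aux r m _ ha
    rw [← hfact, natDegree_map] at h1
    exact h1.symm
  have hGfact : (f.comp (C α * X)).map (algebraMap k (AlgebraicClosure k)) =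
      C (algebraMap k (AlgebraicClosure k) f.leadingCoeff *
          (algebraMap k (AlgebraicClosure k) α) ^ f.natDegree) *
        ∏ i, (X - C ((algebraMap k (AlgebraicClosure k) α)⁻¹ * r i)) ^ m i := by
    rw [map_comp, Polynomial.map_mul, map_C, Polynomial.map_X, hfact]
    rw [mul_comp, C_comp, prod_comp]
    simp only [pow_comp, sub_comp, X_comp, C_comp]
    have hfac : ∀ i : Fin s, C (algebraMap k (AlgebraicClosure k) α) * X - C (r i) =
        C (algebraMap k (AlgebraicClosure k) α) *
          (X - C ((algebraMap k (AlgebraicClosure k) α)⁻¹ * r i)) := by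
      intro i
      rw [mul_sub, ← C_mul, mul_inv_cancel_left₀ hβ]
    simp_rw [hfac, mul_pow, Finset.prod_mul_distrib, Finset.prod_pow_eq_pow_sum, ← C_pow, hn]
    rw [← mul_assoc, ← C_mul]
  rw [hGfact, hfact, tol_homothety_aux r m hr hm _ ha _ hβ _ hn]
end

section
/- Let k be a field and f ∈ k[x] a nonzero polynomial. If every monic irreducible factor of f (over k) is separable, then tol(f) is a nonzero element of k (i.e., the element tol(f) of the algebraic closure lies in the image of k and is nonzero). -/
/-!
The roots of `f` in `k̄` are separable over `k`, and `tol f` is a rational expression in them and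
the leading coefficient, so it lies in the separable closure of `k`. Since `tol` commutes with
field embeddings and every automorphism of `k̄/k` fixes `f`, it fixes `tol f`; a separable element
fixed by all automorphisms of a normal extension lies in the base field. Nonvanishing holds
because the product runs over pairs of distinct roots.
-/

open Polynomial
open scoped Classical

theorem tol_ne_zero {K : Type*} [Field K] {F : K[X]} (hF : F ≠ 0) : tol F ≠ 0 := by
  refine mul_ne_zero (zpow_ne_zero _ (leadingCoeff_ne_zero.2 hF)) (Finset.prod_ne_zero_iff.2 ?_)
  intro p hp
  induction p with
  | _ a b =>
    rw [Finset.mem_filter, Sym2.mk_isDiag_iff] at hp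
    exact pow_ne_zero _ (pow_ne_zero _ (sub_ne_zero.2 hp.2))

theorem tol_mem {K S : Type*} [Field K] [SetLike S K] [SubfieldClass S K] (s : S) {F : K[X]}
    (hlc : F.leadingCoeff ∈ s) (hroots : ∀ a ∈ F.roots, a ∈ s) : tol F ∈ s := by
  refine mul_mem (zpow_mem hlc _) (prod_mem fun p hp => ?_)
  induction p with
  | _ a b =>
    rw [Finset.mem_filter, Finset.mk_mem_sym2_iff, Multiset.mem_toFinset,
      Multiset.mem_toFinset] at hp
    exact pow_mem (pow_mem (sub_mem (hroots a hp.1.1) (hroots b hp.1.2)) _) _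

theorem tol_map_of_splits {K L : Type*} [Field K] [Field L] (φ : K →+* L) {F : K[X]}
    (hF : F.Splits) : tol (F.map φ) = φ (tol F) := by
  rw [tol, tol, map_mul, map_zpow₀, map_prod, leadingCoeff_map, natDegree_map,
    hF.roots_map_of_injective φ.injective, Multiset.toFinset_map, Finset.sym2_image,
    Finset.filter_image, Finset.prod_image (Sym2.map.injective φ.injective).injOn]
  congr 1
  refine Finset.prod_congr ?_ fun p _ => ?_
  · ext p
    simp [Sym2.isDiag_map φ.injective]
  · induction p with
    | _ a b => simp [← eq_rootMultiplicity_map φ.injective]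

theorem algEquiv_tol_map_algebraMap {k L : Type*} [Field k] [Field L] [Algebra k L] {f : k[X]}
    (hf : (f.map (algebraMap k L)).Splits) (σ : L ≃ₐ[k] L) :
    σ (tol (f.map (algebraMap k L))) = tol (f.map (algebraMap k L)) := by
  rw [← RingHom.coe_coe σ, ← tol_map_of_splits _ hf, map_map]
  congr 2
  ext
  simp

theorem isSeparable_of_aeval_eq_zero {k L : Type*} [Field k] [Field L] [Algebra k L] {f : k[X]}
    (hf : f ≠ 0) (hsep : ∀ g : k[X], g.Monic → Irreducible g → g ∣ f → g.Separable) {r : L}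
    (hr : aeval r f = 0) : IsSeparable k r :=
  have hr_int : IsIntegral k r := IsAlgebraic.isIntegral ⟨f, hf, hr⟩
  hsep _ (minpoly.monic hr_int) (minpoly.irreducible hr_int) (minpoly.dvd k r hr)

theorem mem_bot_of_isSeparable_of_forall_algEquiv_apply_eq {K L : Type*} [Field K] [Field L]
    [Algebra K L] [Normal K L] {x : L} (hsep : IsSeparable K x) (hfix : ∀ σ : Gal(L/K), σ x = x) :
    x ∈ (⊥ : Subalgebra K L) := by
  by_contra hx
  obtain ⟨y, hne, hy⟩ := (notMem_iff_exists_ne_and_isConjRoot hsep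
    (Normal.splits' x)).1 hx
  obtain ⟨σ, hσ⟩ := hy.exists_algEquiv
  exact hne (σ.injective (hσ.trans (hfix σ).symm)).symm

/-- If every monic irreducible factor of the nonzero polynomial `f ∈ k[x]` is separable, then
`tol f` is (the image in the algebraic closure of) a nonzero element of `k`. -/
theorem tol_rational_of_separable_factors {k : Type*} [Field k] (f : k[X]) (hf : f ≠ 0)
    (hsep : ∀ g : k[X], g.Monic → Irreducible g → g ∣ f → g.Separable) :
    ∃ c : k, c ≠ 0 ∧
      algebraMap k (AlgebraicClosure k) c = tol (f.map (algebraMap k (AlgebraicClosure k))) := by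
  set F := f.map (algebraMap k (AlgebraicClosure k))
  have hF : F ≠ 0 := (Polynomial.map_ne_zero_iff (algebraMap k _).injective).2 hf
  have hsep_tol : IsSeparable k (tol F) := by
    refine tol_mem (separableClosure k (AlgebraicClosure k)) ?_ fun a ha => ?_
    · rw [leadingCoeff_map]
      exact IntermediateField.algebraMap_mem _ _
    · rw [mem_roots_map_of_injective (algebraMap k _).injective hf, ← aeval_def] at ha
      exact isSeparable_of_aeval_eq_zero hf hsep ha
  obtain ⟨c, hc⟩ := Algebra.mem_bot.1 <| mem_bot_of_isSeparable_of_forall_algEquiv_apply_eq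
    hsep_tol (algEquiv_tol_map_algebraMap (IsAlgClosed.splits F))
  exact ⟨c, fun h => tol_ne_zero hF (by rw [← hc, h, map_zero]), hc⟩
end

section
/- Let k be a field of characteristic p > 0 and let f ∈ k[x] be a monic, irreducible, inseparable polynomial. Write f(x) = f_sep(x^{p^e}) where f_sep ∈ k[x] is separable and e ≥ 1, and let r_1, …, r_s ∈ k̄ be the (distinct) roots of f_sep. Then tol(f) = ∏_{1≤i<j≤s} (r_i − r_j)^{2p^e} = disc(f_sep)^{p^e}. -/
open Polynomial
open scoped Classical

/-- The discriminant of `g`: with roots `α_1, …, α_m ∈ K` listed with multiplicity,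
`disc g = lc(g)^{2m-2} ∏_{i<j} (α_i - α_j)^2` (well defined: the factors are symmetric). -/
noncomputable def disc {K : Type*} [Field K] (g : K[X]) : K :=
  g.leadingCoeff ^ (2 * (g.natDegree : ℤ) - 2) *
    ∏ ij ∈ Finset.univ.filter
        (fun ij : Fin g.roots.toList.length × Fin g.roots.toList.length => ij.1 < ij.2),
      (g.roots.toList.get ij.1 - g.roots.toList.get ij.2) ^ 2

/-! Over `k̄` the Frobenius `x ↦ x ^ p ^ e` is a bijection, so with `ρ_i ^ p ^ e = r_i` the
polynomial `f = f_sep(x ^ p ^ e)` factors as `∏ (x - ρ_i) ^ p ^ e`: its distinct roots are the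
`ρ_i`, each of multiplicity `p ^ e`. Hence every pair of roots contributes
`(ρ_i - ρ_j) ^ (2 p ^ e p ^ e) = (r_i - r_j) ^ (2 p ^ e)` to `tol f`, Frobenius being additive. -/

open Finset

theorem Finset.prod_sym2_filter_not_isDiag {ι M : Type*} [LinearOrder ι] [CommMonoid M]
    (s : Finset ι) (f : Sym2 ι → M) :
    ∏ i ∈ s.sym2 with ¬ i.IsDiag, f i = ∏ i ∈ s.offDiag with i.1 < i.2, f s(i.1, i.2) := by
  rw [offDiag_filter_lt_eq_filter_le]
  conv_rhs => rw [← prod_subtype_eq_prod_filter]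
  refine (prod_equiv Sym2.sortEquiv.symm ?_ ?_).symm
  all_goals aesop

theorem Finset.prod_sym2_image_filter_not_isDiag {ι α M : Type*} [Fintype ι] [LinearOrder ι]
    [CommMonoid M] {v : ι → α} (hv : Function.Injective v) (f : Sym2 α → M) :
    ∏ z ∈ (univ.image v).sym2 with ¬ z.IsDiag, f z =
      ∏ ij : ι × ι with ij.1 < ij.2, f s(v ij.1, v ij.2) := by
  simp_rw [sym2_image, filter_image, Sym2.isDiag_map hv]
  rw [prod_image fun _ _ _ _ h => Sym2.map.injective hv h, prod_sym2_filter_not_isDiag]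
  refine prod_congr ?_ fun _ _ => rfl
  ext ij
  simpa using ne_of_lt

theorem Polynomial.roots_prod_univ_X_sub_C {K ι : Type*} [Field K] [Fintype ι] (r : ι → K) :
    (∏ i, (X - C (r i))).roots = univ.val.map r := by
  simpa [Multiset.map_map] using roots_multiset_prod_X_sub_C (univ.val.map r)

theorem tol_of_roots_eq_nsmul {K ι : Type*} [Field K] [Fintype ι] [LinearOrder ι] {F : K[X]}
    (hF : F.Monic) {m : ℕ} (hm : m ≠ 0) {ρ : ι → K} (hρ : Function.Injective ρ)
    (hroots : F.roots = m • univ.val.map ρ) :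
    tol F = ∏ ij : ι × ι with ij.1 < ij.2, (ρ ij.1 - ρ ij.2) ^ (2 * (m * m)) := by
  have hmult (i : ι) : F.rootMultiplicity (ρ i) = m := by
    rw [← count_roots, hroots, Multiset.count_nsmul, Multiset.count_map_eq_count' ρ _ hρ,
      Multiset.count_univ, mul_one]
  have hsupp : F.roots.toFinset = univ.image ρ := by
    rw [hroots, Multiset.toFinset_nsmul _ _ hm, Multiset.toFinset_map, val_toFinset]
  rw [tol, hF.leadingCoeff, one_zpow, one_mul, hsupp, prod_sym2_image_filter_not_isDiag hρ]
  refine prod_congr rfl fun ij _ => ?_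
  simp only [Sym2.lift_mk, hmult, pow_mul]

theorem disc_prod_X_sub_C {K ι : Type*} [Field K] [Fintype ι] [LinearOrder ι] {r : ι → K}
    (hr : Function.Injective r) :
    disc (∏ i, (X - C (r i))) = ∏ ij : ι × ι with ij.1 < ij.2, (r ij.1 - r ij.2) ^ 2 := by
  set G := ∏ i, (X - C (r i))
  have hroots : G.roots = univ.val.map r := roots_prod_univ_X_sub_C r
  have hnodup : G.roots.toList.Nodup := by
    rw [← Multiset.coe_nodup, Multiset.coe_toList, hroots]
    exact univ.nodup.map hr
  have himage : univ.image G.roots.toList.get = univ.image r := by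
    rw [Fin.univ_image_get, ← List.toFinset_coe, Multiset.coe_toList, hroots,
      Multiset.toFinset_map, val_toFinset]
  let sqDiff : Sym2 K → K := Sym2.lift ⟨fun a b => (a - b) ^ 2, fun a b => by ring⟩
  rw [disc, (monic_prod_of_monic _ _ fun i _ => monic_X_sub_C (r i)).leadingCoeff, one_zpow,
    one_mul]
  calc _ = ∏ z ∈ (univ.image G.roots.toList.get).sym2 with ¬ z.IsDiag, sqDiff z :=
        (prod_sym2_image_filter_not_isDiag (List.nodup_iff_injective_get.mp hnodup) _).symm
    _ = _ := by rw [himage, prod_sym2_image_filter_not_isDiag hr]; rfl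

theorem tol_of_inseparable_irreducible_general {k : Type*} [Field k] (p : ℕ) [Fact p.Prime] [CharP k p]
    (f fsep : k[X]) (hmonic : f.Monic)
    (e : ℕ) (hf : f = fsep.comp (X ^ p ^ e))
    (s : ℕ) (r : Fin s → AlgebraicClosure k) (hr : Function.Injective r)
    (hroots : fsep.map (algebraMap k (AlgebraicClosure k)) = ∏ i, (X - C (r i))) :
    tol (f.map (algebraMap k (AlgebraicClosure k))) =
        ∏ ij ∈ Finset.univ.filter (fun ij : Fin s × Fin s => ij.1 < ij.2),
          (r ij.1 - r ij.2) ^ (2 * p ^ e) ∧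
      tol (f.map (algebraMap k (AlgebraicClosure k))) =
        disc (fsep.map (algebraMap k (AlgebraicClosure k))) ^ p ^ e := by
  set σ := (iterateFrobeniusEquiv (AlgebraicClosure k) p e).symm
  have hroots_f : (f.map (algebraMap k _)).roots = p ^ e • univ.val.map (σ ∘ r) := by
    rw [hf, ← expand_eq_comp_X_pow, map_expand, hroots, roots_expand_pow,
      roots_prod_univ_X_sub_C, Multiset.map_map]
  have hσ (x : AlgebraicClosure k) : σ x ^ p ^ e = x :=
    (iterateFrobeniusEquiv (AlgebraicClosure k) p e).apply_symm_apply x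
  have hpow (i j : Fin s) :
      (σ (r i) - σ (r j)) ^ (2 * (p ^ e * p ^ e)) = (r i - r j) ^ (2 * p ^ e) := by
    rw [mul_left_comm, pow_mul, sub_pow_char_pow, hσ, hσ]
  have htol : tol (f.map (algebraMap k _)) = _ :=
    (tol_of_roots_eq_nsmul (hmonic.map _) (pow_ne_zero e (Fact.out : p.Prime).ne_zero)
      (σ.injective.comp hr) hroots_f).trans (prod_congr rfl fun ij _ => hpow ij.1 ij.2)
  refine ⟨htol, ?_⟩
  rw [htol, hroots, disc_prod_X_sub_C hr, ← prod_pow]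
  exact prod_congr rfl fun ij _ => pow_mul _ _ _

/-- Lemma (inseparable irreducible polynomials): over a field `k` of characteristic `p > 0`,
let `f` be monic, irreducible and inseparable, written `f(x) = f_sep(x^{p^e})` with `f_sep`
separable and `e ≥ 1`, and let `r_1, …, r_s` be the (distinct) roots of `f_sep` in the
algebraic closure.  Then `tol f = ∏_{i<j} (r_i - r_j)^{2 p^e} = disc(f_sep)^{p^e}`. -/
theorem tol_of_inseparable_irreducible {k : Type*} [Field k] (p : ℕ) [Fact p.Prime] [CharP k p]
    (f fsep : k[X]) (hmonic : f.Monic) (hirr : Irreducible f) (hinsep : ¬ f.Separable)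
    (e : ℕ) (he : 1 ≤ e) (hsep : fsep.Separable) (hf : f = fsep.comp (X ^ p ^ e))
    (s : ℕ) (r : Fin s → AlgebraicClosure k) (hr : Function.Injective r)
    (hroots : fsep.map (algebraMap k (AlgebraicClosure k)) = ∏ i, (X - C (r i))) :
    tol (f.map (algebraMap k (AlgebraicClosure k))) =
        ∏ ij ∈ Finset.univ.filter (fun ij : Fin s × Fin s => ij.1 < ij.2),
          (r ij.1 - r ij.2) ^ (2 * p ^ e) ∧
      tol (f.map (algebraMap k (AlgebraicClosure k))) =
        disc (fsep.map (algebraMap k (AlgebraicClosure k))) ^ p ^ e :=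
  tol_of_inseparable_irreducible_general p f fsep hmonic e hf s r hr hroots
end

section
/- Let k be a field of characteristic exponent p (p = char k if char k > 0, and p = 1 if char k = 0), and let f ∈ k[x] be monic and irreducible. Write f(x) = f_sep(x^{p^e}) where e ≥ 0 is the degree of inseparability of f and f_sep ∈ k[x] is separable. Then tol(f) = disc(f_sep)^{p^e}. -/
open Polynomial
open scoped Classical

/-!
Write `q = p ^ e`. Over the perfect field `k̄`, `f = expand q f_sep` has as roots the `q`-th roots
`ψ a` of the roots `a` of `f_sep`, each with `q` times the multiplicity of `a`. Since
`(ψ a - ψ b) ^ q = a - b` (Frobenius), every factor of `tol f` is the `q`-th power of the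
corresponding factor of `tol f_sep`, so `tol f = tol f_sep ^ q`; and the tolerant of a polynomial
with simple roots is its discriminant.
-/

section Sym2Products

variable {α M : Type*} [CommMonoid M]

theorem Finset.prod_sym2_filter_not_isDiag_eq_prod_lt [LinearOrder α] (s : Finset α)
    (f : Sym2 α → M) :
    ∏ z ∈ s.sym2 with ¬z.IsDiag, f z = ∏ ij ∈ s ×ˢ s with ij.1 < ij.2, f s(ij.1, ij.2) := by
  symm
  refine Finset.prod_nbij' (fun ij => s(ij.1, ij.2)) (fun z => (z.inf, z.sup)) ?_ ?_ ?_ ?_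
    fun _ _ => rfl
  · rintro ⟨a, b⟩ h
    simp only [Finset.mem_filter, Finset.mem_product] at h
    simp [h.1, h.2.ne]
  · intro z hz
    induction z with | _ a b
    simp only [Finset.mem_filter, Finset.mk_mem_sym2_iff, Sym2.mk_isDiag_iff] at hz
    simp only [Finset.mem_filter, Finset.mem_product, Sym2.inf_mk, Sym2.sup_mk,
      inf_lt_sup]
    refine ⟨⟨?_, ?_⟩, hz.2⟩
    · rcases min_choice a b with h | h <;> simp [h, hz.1]
    · rcases max_choice a b with h | h <;> simp [h, hz.1]
  · rintro ⟨a, b⟩ h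
    simp only [Finset.mem_filter] at h
    simp [h.2.le]
  · intro z _
    exact Sym2.sortEquiv.left_inv z

theorem List.Nodup.prod_sym2_filter_not_isDiag_eq_prod_lt [DecidableEq α] {l : List α}
    (hl : l.Nodup) (f : Sym2 α → M) :
    ∏ z ∈ l.toFinset.sym2 with ¬z.IsDiag, f z =
      ∏ ij : Fin l.length × Fin l.length with ij.1 < ij.2, f s(l.get ij.1, l.get ij.2) := by
  set e : Fin l.length ↪ α := ⟨l.get, fun _ _ => hl.get_inj_iff.mp⟩
  have hl_eq : l.toFinset = Finset.univ.map e := by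
    ext a
    simp only [List.mem_toFinset, Finset.mem_map, Finset.mem_univ, true_and, List.mem_iff_get]
    rfl
  rw [hl_eq, Finset.sym2_map, Finset.filter_map, Finset.prod_map]
  simp only [Function.comp_def, Function.Embedding.sym2Map_apply, Sym2.isDiag_map e.injective]
  rw [Finset.prod_sym2_filter_not_isDiag_eq_prod_lt, Finset.univ_product_univ]
  rfl

end Sym2Products

section Tolerant

variable {K : Type*} [Field K]

theorem tol_eq_disc_of_nodup_roots {g : K[X]} (hg : g.roots.Nodup) : tol g = disc g := by
  have hl : g.roots.toList.Nodup := by rwa [← Multiset.coe_nodup, Multiset.coe_toList]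
  have hfinset : g.roots.toFinset = g.roots.toList.toFinset := by ext; simp
  unfold tol disc
  rw [hfinset]
  congr 1
  refine (Finset.prod_congr rfl fun z hz => ?_).trans <|
    hl.prod_sym2_filter_not_isDiag_eq_prod_lt
      (Sym2.lift ⟨fun a b => (a - b) ^ 2, fun a b => by ring⟩)
  induction z with | _ a b
  simp only [Finset.mem_filter, Finset.mk_mem_sym2_iff, List.mem_toFinset, Multiset.mem_toList]
    at hz
  simp only [Sym2.lift_mk, ← count_roots, Multiset.count_eq_one_of_mem hg hz.1.1,
    Multiset.count_eq_one_of_mem hg hz.1.2, mul_one, pow_one]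

theorem tol_expand_pow_of_monic (p n : ℕ) [ExpChar K p] [PerfectRing K p] {G : K[X]}
    (hG : G.Monic) : tol (expand K (p ^ n) G) = tol G ^ p ^ n := by
  set ψ := (iterateFrobeniusEquiv K p n).symm
  have hψ_pow (a : K) : ψ a ^ p ^ n = a := (iterateFrobeniusEquiv K p n).apply_symm_apply a
  have hroots : (expand K (p ^ n) G).roots.toFinset =
      G.roots.toFinset.map ⟨ψ, ψ.injective⟩ := by
    rw [roots_expand_pow, Multiset.toFinset_nsmul _ _ (expChar_pow_pos K p n).ne',
      Multiset.toFinset_map, Finset.map_eq_image]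
    rfl
  have hmult (a : K) :
      rootMultiplicity (ψ a) (expand K (p ^ n) G) = p ^ n * rootMultiplicity a G := by
    rw [rootMultiplicity_expand_pow, hψ_pow]
  unfold tol
  rw [((monic_expand_iff (expChar_pow_pos K p n)).mpr hG).leadingCoeff, hG.leadingCoeff,
    one_zpow, one_zpow, one_mul, one_mul, hroots, Finset.sym2_map, Finset.filter_map,
    Finset.prod_map, ← Finset.prod_pow]
  simp only [Function.comp_def, Function.Embedding.sym2Map_apply, Function.Embedding.coeFn_mk,
    Sym2.isDiag_map ψ.injective]
  refine Finset.prod_congr rfl fun z _ => ?_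
  induction z with | _ a b
  simp only [Sym2.map_mk, Sym2.lift_mk, hmult]
  have hsub : a - b = (ψ a - ψ b) ^ p ^ n := by rw [sub_pow_expChar_pow, hψ_pow, hψ_pow]
  rw [hsub, ← pow_mul, ← pow_mul, ← pow_mul, ← pow_mul]
  congr 1
  ring

end Tolerant

theorem tol_irreducible_eq_disc_pow_general {k : Type*} [Field k]
    (p : ℕ) (hp : p = if ringChar k = 0 then 1 else ringChar k)
    (f fsep : k[X]) (hmonic : f.Monic)
    (e : ℕ) (hsep : fsep.Separable) (hf : f = fsep.comp (X ^ p ^ e)) :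
    tol (f.map (algebraMap k (AlgebraicClosure k))) =
      disc (fsep.map (algebraMap k (AlgebraicClosure k))) ^ p ^ e := by
  have : ExpChar k p := ringExpChar.of_eq (by rw [hp, ringExpChar]; split_ifs <;> omega)
  have : ExpChar (AlgebraicClosure k) p :=
    expChar_of_injective_algebraMap (algebraMap k _).injective p
  rw [← expand_eq_comp_X_pow] at hf
  have hmonic_sep : fsep.Monic := (monic_expand_iff (expChar_pow_pos k p e)).mp (hf ▸ hmonic)
  rw [hf, map_expand, tol_expand_pow_of_monic p e (hmonic_sep.map _),
    tol_eq_disc_of_nodup_roots (nodup_roots hsep.map)]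

/-- Let `k` have characteristic exponent `p` (`p = char k` if `char k > 0`, else `p = 1`), and
let `f ∈ k[x]` be monic and irreducible, with `f(x) = f_sep(x^{p^e})` where `e` is the degree of
inseparability of `f` (minimal such exponent) and `f_sep` is separable.
Then `tol f = disc(f_sep)^{p^e}`. -/
theorem tol_irreducible_eq_disc_pow {k : Type*} [Field k]
    (p : ℕ) (hp : p = if ringChar k = 0 then 1 else ringChar k)
    (f fsep : k[X]) (hmonic : f.Monic) (hirr : Irreducible f)
    (e : ℕ) (hsep : fsep.Separable) (hf : f = fsep.comp (X ^ p ^ e))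
    (hmin : ∀ e' : ℕ, (∃ g : k[X], g.Separable ∧ f = g.comp (X ^ p ^ e')) → e ≤ e') :
    tol (f.map (algebraMap k (AlgebraicClosure k))) =
      disc (fsep.map (algebraMap k (AlgebraicClosure k))) ^ p ^ e :=
  tol_irreducible_eq_disc_pow_general p hp f fsep hmonic e hsep hf
end

section
/- For any field k and any nonzero polynomial f ∈ k[x], the tolerant tol(f) is a nonzero element of k (i.e., the element tol(f) of the algebraic closure lies in the image of k and is nonzero). -/
open Polynomial
open scoped Classical

namespace Multiset

variable {R S : Type*} [CommRing R] [CommRing S]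

noncomputable def distinctDiffProd (s t : Multiset R) : R :=
  (s.map fun a => (t.map fun b => if a = b then 1 else a - b).prod).prod

theorem distinctDiffProd_bind_left {ι : Type*} (m : Multiset ι) (s : ι → Multiset R)
    (t : Multiset R) :
    distinctDiffProd (m.bind s) t = (m.map fun i => distinctDiffProd (s i) t).prod := by
  simp only [distinctDiffProd, map_bind, prod_bind]

theorem distinctDiffProd_bind_right {ι : Type*} (s : Multiset R) (m : Multiset ι)
    (t : ι → Multiset R) :
    distinctDiffProd s (m.bind t) = (m.map fun i => distinctDiffProd s (t i)).prod := by
  simp only [distinctDiffProd, map_bind, prod_bind]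
  exact prod_map_prod_map s m

theorem distinctDiffProd_nsmul (n : ℕ) (s : Multiset R) :
    distinctDiffProd (n • s) (n • s) = distinctDiffProd s s ^ (n * n) := by
  simp only [distinctDiffProd, map_nsmul, prod_nsmul, prod_map_pow, pow_mul]

theorem distinctDiffProd_map {F : Type*} [FunLike F R S] [RingHomClass F R S] (φ : F)
    (hφ : Function.Injective φ) (s t : Multiset R) :
    distinctDiffProd (s.map φ) (t.map φ) = φ (distinctDiffProd s t) := by
  simp only [distinctDiffProd, map_map, Function.comp_def, map_multiset_prod, hφ.eq_iff,
    apply_ite φ, map_one, map_sub]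

theorem distinctDiffProd_of_disjoint {s t : Multiset R} (h : Disjoint s t) :
    distinctDiffProd s t = ((s ×ˢ t).map fun p => p.1 - p.2).prod := by
  change _ = ((s.bind fun a => t.map (Prod.mk a)).map _).prod
  rw [distinctDiffProd, map_bind, prod_bind]
  refine congrArg prod (map_congr rfl fun a ha => congrArg prod ?_)
  rw [map_map]
  refine map_congr rfl fun b hb => if_neg ?_
  rintro rfl
  exact disjoint_left.1 h ha hb

theorem distinctDiffProd_self_of_nodup {s : Multiset R} (hs : s.Nodup) :
    distinctDiffProd s s = (s.map fun a => ((s.erase a).map (a - ·)).prod).prod := by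
  refine congrArg prod (map_congr rfl fun a ha => ?_)
  conv_lhs => rw [← cons_erase ha]
  rw [map_cons, prod_cons, if_pos rfl, one_mul]
  refine congrArg prod (map_congr rfl fun b hb => if_neg ?_)
  rintro rfl
  exact hs.notMem_erase hb

theorem distinctDiffProd_self_eq_prod_offDiag (s : Multiset R) :
    distinctDiffProd s s =
      ∏ p ∈ s.toFinset.offDiag, (p.1 - p.2) ^ (s.count p.1 * s.count p.2) := by
  set u := s.toFinset
  have hsub : u.offDiag ⊆ u ×ˢ u := fun p hp =>
    Finset.mem_product.2 ⟨(Finset.mem_offDiag.1 hp).1, (Finset.mem_offDiag.1 hp).2.1⟩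
  calc distinctDiffProd s s
      = ∏ p ∈ u ×ˢ u, if p.1 = p.2 then 1 else (p.1 - p.2) ^ (s.count p.1 * s.count p.2) := by
        simp only [distinctDiffProd, Finset.prod_multiset_map_count, ← Finset.prod_pow,
          Finset.prod_product]
        refine Finset.prod_congr rfl fun a _ => Finset.prod_congr rfl fun b _ => ?_
        split_ifs <;> simp [← pow_mul, mul_comm]
    _ = ∏ p ∈ u.offDiag, if p.1 = p.2 then 1 else (p.1 - p.2) ^ (s.count p.1 * s.count p.2) :=
        (Finset.prod_subset hsub fun p hp hoff => if_pos <| by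
          by_contra hne
          exact hoff (Finset.mem_offDiag.2 ⟨(Finset.mem_product.1 hp).1,
            (Finset.mem_product.1 hp).2, hne⟩)).symm
    _ = _ := Finset.prod_congr rfl fun p hp => if_neg (Finset.mem_offDiag.1 hp).2.2

theorem distinctDiffProd_ne_zero [IsDomain R] (s t : Multiset R) : distinctDiffProd s t ≠ 0 := by
  refine prod_ne_zero fun h => ?_
  obtain ⟨a, -, ha⟩ := mem_map.1 h
  refine prod_ne_zero (fun h' => ?_) ha
  obtain ⟨b, -, hb⟩ := mem_map.1 h'
  split_ifs at hb with hab
  exacts [one_ne_zero hb, sub_ne_zero.2 hab hb]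

end Multiset

open Finset in
theorem Finset.prod_offDiag_eq_sq_prod_sym2 {α M : Type*} [DecidableEq α] [CommMonoid M]
    (s : Finset α) (f : Sym2 α → M) :
    ∏ p ∈ s.offDiag, f s(p.1, p.2) = (∏ z ∈ s.sym2 with ¬z.IsDiag, f z) ^ 2 := by
  have himage : s.offDiag.image (Function.uncurry Sym2.mk) = {z ∈ s.sym2 | ¬z.IsDiag} := by
    rw [sym2_eq_image, Sym2.filter_image_mk_not_isDiag]
  have hfiber : ∀ z ∈ s.offDiag.image (Function.uncurry Sym2.mk),
      #{p ∈ s.offDiag | Function.uncurry Sym2.mk p = z} = 2 := by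
    simp only [mem_image, mem_offDiag]
    rintro _ ⟨⟨a, b⟩, ⟨ha, hb, hab⟩, rfl⟩
    rw [card_eq_two]
    refine ⟨(a, b), (b, a), by simp [hab], ?_⟩
    refine Finset.ext fun p => ?_
    obtain ⟨x, y⟩ := p
    rw [mem_filter, mem_offDiag, mem_insert, mem_singleton]
    simp only [Function.uncurry_apply_pair, Sym2.eq_iff, Prod.mk.injEq]
    constructor
    · exact fun h => h.2
    · rintro (⟨rfl, rfl⟩ | ⟨rfl, rfl⟩)
      · exact ⟨⟨ha, hb, hab⟩, .inl ⟨rfl, rfl⟩⟩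
      · exact ⟨⟨hb, ha, Ne.symm hab⟩, .inr ⟨rfl, rfl⟩⟩
  rw [← himage, ← prod_pow, ← prod_congr rfl fun z hz => congrArg (f z ^ ·) (hfiber z hz)]
  exact prod_comp f (Function.uncurry Sym2.mk)

theorem sq_tol {K : Type*} [Field K] (f : K[X]) :
    tol f ^ 2 =
      (f.leadingCoeff ^ (2 * (f.natDegree : ℤ) - 2) * f.roots.distinctDiffProd f.roots) ^ 2 := by
  rw [tol, mul_pow, mul_pow, ← Finset.prod_offDiag_eq_sq_prod_sym2,
    Multiset.distinctDiffProd_self_eq_prod_offDiag, ← Finset.prod_pow]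
  refine congrArg _ (Finset.prod_congr rfl fun p _ => ?_)
  simp only [Sym2.lift_mk, count_roots]
  rw [← pow_mul, ← pow_mul, mul_comm 2]

open Multiset UniqueFactorizationMonoid

section
variable {k K : Type*} [Field k] [Field K] [Algebra k K]

theorem aroots_eq_bind_normalizedFactors {f : k[X]} (hf : f ≠ 0) :
    f.aroots K = (normalizedFactors f).bind (aroots · K) := by
  conv_lhs => rw [← leadingCoeff_mul_prod_normalizedFactors f]
  rw [aroots_C_mul _ (leadingCoeff_ne_zero.2 hf), aroots_def, Polynomial.map_multiset_prod,
    roots_multiset_prod, Multiset.bind_map]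
  simp only [Multiset.mem_map, not_exists, not_and]
  exact fun g hg hg0 => zero_notMem_normalizedFactors f <|
    (Polynomial.map_eq_zero_iff (algebraMap k K).injective).1 hg0 ▸ hg

variable [IsAlgClosed K]

theorem distinctDiffProd_aroots_of_separable {h : k[X]} (hm : h.Monic) (hs : h.Separable) :
    distinctDiffProd (h.aroots K) (h.aroots K) =
      algebraMap k K (resultant h (derivative h)) := by
  rw [distinctDiffProd_self_of_nodup (nodup_roots hs.map), ← resultant_map_map,
    ← natDegree_map (p := h) (algebraMap k K),
    ← natDegree_map (p := derivative h) (algebraMap k K), ← derivative_map,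
    resultant_eq_prod_eval _ _ _ le_rfl (IsAlgClosed.splits _), (hm.map _).leadingCoeff, one_pow,
    one_mul]
  refine congrArg prod (map_congr rfl fun a ha => ?_)
  exact ((IsAlgClosed.splits _).eval_root_derivative (hm.map _) ha).symm

theorem distinctDiffProd_aroots_of_isCoprime {g h : k[X]} (hg : g.Monic) (hh : h.Monic)
    (hgh : IsCoprime g h) :
    distinctDiffProd (g.aroots K) (h.aroots K) = algebraMap k K (resultant g h) := by
  have hdisj : Disjoint (g.aroots K) (h.aroots K) := disjoint_left.2 fun {a} hga hha =>
    (aeval_ne_zero_of_isCoprime hgh a).elim (· (mem_aroots.1 hga).2) (· (mem_aroots.1 hha).2)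
  rw [distinctDiffProd_of_disjoint hdisj, ← resultant_map_map,
    ← natDegree_map (p := h) (algebraMap k K), ← natDegree_map (p := g) (algebraMap k K),
    resultant_eq_prod_roots_sub _ _ (hg.map _) (hh.map _) (IsAlgClosed.splits _)
      (IsAlgClosed.splits _)]

theorem distinctDiffProd_aroots_self_mem_of_irreducible {g : k[X]} (hm : g.Monic)
    (hg : Irreducible g) :
    distinctDiffProd (g.aroots K) (g.aroots K) ∈ (algebraMap k K).range := by
  let q := ringExpChar k
  have : ExpChar K q := expChar_of_injective_algebraMap (algebraMap k K).injective q
  obtain ⟨h, hsep, n, rfl⟩ := hg.hasSeparableContraction q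
  have hroots : (expand k (q ^ n) h).aroots K =
      q ^ n • (h.aroots K).map (iterateFrobeniusEquiv K q n).symm := by
    rw [aroots_def, map_expand, roots_expand_pow]
  have hpow (x : K) : (iterateFrobeniusEquiv K q n).symm x ^ q ^ n = x :=
    (iterateFrobeniusEquiv_def K q n _).symm.trans (RingEquiv.apply_symm_apply _ x)
  rw [hroots, distinctDiffProd_nsmul, distinctDiffProd_map _ (RingEquiv.injective _), pow_mul,
    hpow, distinctDiffProd_aroots_of_separable
      ((monic_expand_iff (expChar_pow_pos k q n)).1 hm) hsep]
  exact pow_mem (RingHom.mem_range_self _ _) _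

theorem distinctDiffProd_aroots_mem_of_irreducible {g h : k[X]} (hg : g.Monic) (hh : h.Monic)
    (hgi : Irreducible g) (hhi : Irreducible h) :
    distinctDiffProd (g.aroots K) (h.aroots K) ∈ (algebraMap k K).range := by
  by_cases hgh : g = h
  · subst hgh
    exact distinctDiffProd_aroots_self_mem_of_irreducible hg hgi
  · have hcop : IsCoprime g h := hgi.coprime_iff_not_dvd.2 fun hdvd =>
      hgh (eq_of_monic_of_associated hg hh (associated_of_dvd_dvd hdvd (hgi.dvd_symm hhi hdvd)))
    rw [distinctDiffProd_aroots_of_isCoprime hg hh hcop]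
    exact RingHom.mem_range_self _ _

theorem distinctDiffProd_aroots_mem {f : k[X]} (hf : f ≠ 0) :
    distinctDiffProd (f.aroots K) (f.aroots K) ∈ (algebraMap k K).range := by
  have hfactor (g) (hg : g ∈ normalizedFactors f) : Irreducible g ∧ g.Monic :=
    ((Polynomial.mem_normalizedFactors_iff hf).1 hg).imp_right And.left
  rw [aroots_eq_bind_normalizedFactors hf, distinctDiffProd_bind_left]
  refine multiset_prod_mem _ fun x hx => ?_
  obtain ⟨g, hg, rfl⟩ := mem_map.1 hx
  rw [distinctDiffProd_bind_right]
  refine multiset_prod_mem _ fun y hy => ?_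
  obtain ⟨h, hh, rfl⟩ := mem_map.1 hy
  exact distinctDiffProd_aroots_mem_of_irreducible (hfactor g hg).2 (hfactor h hh).2
    (hfactor g hg).1 (hfactor h hh).1

end

/-- Rationality of the tolerant: for any field `k` and nonzero `f ∈ k[x]`, the tolerant `tol f`
(an a priori element of the algebraic closure) is the image of a nonzero element of `k`. -/
theorem tol_rational {k : Type*} [Field k] (f : k[X]) (hf : f ≠ 0) :
    ∃ c : k, c ≠ 0 ∧
      algebraMap k (AlgebraicClosure k) c = tol (f.map (algebraMap k (AlgebraicClosure k))) := by
  set ι := algebraMap k (AlgebraicClosure k)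
  have hf' : f.map ι ≠ 0 := (Polynomial.map_ne_zero_iff ι.injective).2 hf
  set x := (f.map ι).leadingCoeff ^ (2 * ((f.map ι).natDegree : ℤ) - 2) *
    (f.map ι).roots.distinctDiffProd (f.map ι).roots
  have hx : x ∈ ι.range := by
    refine mul_mem ⟨f.leadingCoeff ^ (2 * ((f.map ι).natDegree : ℤ) - 2), ?_⟩
      (distinctDiffProd_aroots_mem hf)
    rw [map_zpow₀, leadingCoeff_map]
  have hx0 : x ≠ 0 :=
    mul_ne_zero (zpow_ne_zero _ (leadingCoeff_ne_zero.2 hf')) (distinctDiffProd_ne_zero _ _)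
  obtain ⟨c, hc⟩ : tol (f.map ι) ∈ ι.range := by
    rcases sq_eq_sq_iff_eq_or_eq_neg.1 (sq_tol (f.map ι)) with h | h <;> rw [h]
    exacts [hx, neg_mem hx]
  refine ⟨c, ?_, hc⟩
  rintro rfl
  apply hx0
  rw [← sq_eq_zero_iff, ← sq_tol, ← hc, _root_.map_zero, sq, zero_mul]
end

section
/- For any field k and any nonzero polynomial f ∈ k[x] of degree n with leading coefficient a_n, the duplicant dupl(f) := a_n² · tol(f) is a nonzero element of k (i.e., the element dupl(f) of the algebraic closure lies in the image of k and is nonzero). -/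
open Polynomial
open scoped Classical

/-- The duplicant of `f` is `dupl f = a_n^{2n} ∏_{i<j} (r_i - r_j)^{2 m_i m_j} = a_n² · tol f`. -/
noncomputable def dupl {K : Type*} [Field K] (f : K[X]) : K :=
  f.leadingCoeff ^ 2 * tol f

/-! The roots of `f` need not lie in a separable extension of `k`, but in exponential
characteristic `q` each root `r` has a power `r ^ q ^ n` that is separable over `k`, and `q ^ n`
divides the multiplicity of `r`. Hence every factor `(r_i - r_j) ^ (2 m_i m_j)` is a polynomial in
separable elements and `dupl f` is separable over `k`. Being a symmetric function of the roots it
is fixed by `Gal(k̄/k)`, and a separable element fixed by the Galois group lies in `k`. -/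

section Separability

variable {k K : Type*} [Field k] [Field K] [Algebra k K]

theorem mem_range_algebraMap_of_isSeparable_of_forall_algEquiv_apply_eq [Normal k K] {x : K}
    (hsep : IsSeparable k x) (hfix : ∀ σ : K ≃ₐ[k] K, σ x = x) :
    x ∈ (algebraMap k K).range := by
  have hx : IsIntegral k x := Normal.isIntegral ‹_› x
  rw [← minpoly.natDegree_eq_one_iff]
  set P := (minpoly k x).map (algebraMap k K)
  -- every root of `P` is a conjugate of `x`, and `P` has simple roots
  have hroots : P.roots ≤ {x} := by
    refine (Multiset.le_iff_subset (nodup_roots (Separable.map hsep))).mpr fun y hy => ?_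
    obtain ⟨σ, hσ⟩ := minpoly.exists_algEquiv_of_root' hx.isAlgebraic
      (by rwa [aeval_def, ← mem_roots_map (minpoly.ne_zero hx)])
    simp [← hσ, hfix σ]
  have hcard : (minpoly k x).natDegree = Multiset.card P.roots := by
    rw [← natDegree_map (algebraMap k K)]
    exact (Normal.splits ‹_› x).natDegree_eq_card_roots
  have hle : Multiset.card P.roots ≤ 1 := by simpa using Multiset.card_le_card hroots
  have := minpoly.natDegree_pos hx
  omega

theorem rootMultiplicity_minpoly_map_dvd {r : K} (hr : IsIntegral k r) {f : k[X]} (hf : f ≠ 0) :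
    rootMultiplicity r ((minpoly k r).map (algebraMap k K)) ∣
      rootMultiplicity r (f.map (algebraMap k K)) := by
  obtain ⟨n, g, hg, rfl⟩ := WfDvdMonoid.max_power_factor hf (minpoly.irreducible hr)
  have hgr : rootMultiplicity r (g.map (algebraMap k K)) = 0 :=
    rootMultiplicity_eq_zero fun h => hg (minpoly.dvd k r (by rwa [aeval_def, eval₂_eq_eval_map]))
  have hne : (minpoly k r ^ n * g).map (algebraMap k K) ≠ 0 :=
    (Polynomial.map_ne_zero_iff (algebraMap k K).injective).mpr hf
  rw [Polynomial.map_mul, rootMultiplicity_mul (by rwa [← Polynomial.map_mul]), hgr, add_zero,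
    Polynomial.map_pow, ← count_roots (_ ^ n), roots_pow, Multiset.count_nsmul, count_roots]
  exact dvd_mul_left _ _

theorem exists_isSeparable_pow_and_dvd_rootMultiplicity (q : ℕ) [ExpChar k q] {r : K}
    (hr : IsIntegral k r) :
    ∃ n, IsSeparable k (r ^ q ^ n) ∧
      ∀ f : k[X], f ≠ 0 → q ^ n ∣ rootMultiplicity r (f.map (algebraMap k K)) := by
  have : ExpChar K q := expChar_of_injective_algebraMap (algebraMap k K).injective q
  obtain ⟨g, hg, n, hexp⟩ := (minpoly.irreducible hr).hasSeparableContraction q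
  refine ⟨n, hg.of_dvd (minpoly.dvd k _ ?_), fun f hf => ?_⟩
  · rw [← expand_aeval, hexp, minpoly.aeval]
  · refine dvd_trans ?_ (rootMultiplicity_minpoly_map_dvd hr hf)
    rw [← hexp, map_expand, rootMultiplicity_expand_pow]
    exact dvd_mul_right _ _

theorem sub_pow_rootMultiplicity_mul_mem_separableClosure {f : k[X]} (hf : f ≠ 0) {r s : K}
    (hr : IsIntegral k r) (hs : IsIntegral k s) :
    (r - s) ^ (rootMultiplicity r (f.map (algebraMap k K)) *
      rootMultiplicity s (f.map (algebraMap k K))) ∈ separableClosure k K := by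
  obtain ⟨q, _⟩ := ExpChar.exists k
  have : ExpChar K q := expChar_of_injective_algebraMap (algebraMap k K).injective q
  obtain ⟨a, hra, hdvd_r⟩ := exists_isSeparable_pow_and_dvd_rootMultiplicity q hr
  obtain ⟨b, hsb, hdvd_s⟩ := exists_isSeparable_pow_and_dvd_rootMultiplicity q hs
  obtain ⟨c, hc⟩ := hdvd_r f hf
  obtain ⟨d, hd⟩ := hdvd_s f hf
  have hfrob : (r - s) ^ (q ^ a * c * (q ^ b * d)) =
      ((r ^ q ^ a) ^ q ^ b - (s ^ q ^ b) ^ q ^ a) ^ (c * d) := by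
    rw [← pow_mul, ← pow_mul, ← pow_add, mul_comm (q ^ b), ← pow_add, add_comm b,
      ← sub_pow_expChar_pow, ← pow_mul, pow_add]
    ring
  rw [hc, hd, hfrob]
  exact pow_mem (sub_mem (pow_mem (mem_separableClosure_iff.mpr hra) _)
    (pow_mem (mem_separableClosure_iff.mpr hsb) _)) _

theorem dupl_map_mem_separableClosure {f : k[X]} (hf : f ≠ 0) :
    dupl (f.map (algebraMap k K)) ∈ separableClosure k K := by
  have hlc : (f.map (algebraMap k K)).leadingCoeff ∈ separableClosure k K := by
    rw [leadingCoeff_map]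
    exact IntermediateField.algebraMap_mem _ _
  have hint {r : K} (hr : r ∈ (f.map (algebraMap k K)).roots.toFinset) : IsIntegral k r := by
    rw [Multiset.mem_toFinset, mem_roots_map hf, ← aeval_def] at hr
    exact IsAlgebraic.isIntegral ⟨f, hf, hr⟩
  refine mul_mem (pow_mem hlc 2) (mul_mem (zpow_mem hlc _) (prod_mem fun p hp => ?_))
  induction p with
  | _ r s =>
    obtain ⟨hr, hs⟩ := Finset.mk_mem_sym2_iff.mp (Finset.mem_filter.mp hp).1
    simp only [Sym2.lift_mk]
    rw [pow_right_comm]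
    exact pow_mem (sub_pow_rootMultiplicity_mul_mem_separableClosure hf (hint hr) (hint hs)) 2

end Separability

theorem Polynomial.rootMultiplicity_map_ringEquiv {R S : Type*} [CommRing R] [CommRing S]
    (e : R ≃+* S) (g : R[X]) (a : R) :
    rootMultiplicity (e a) (g.map (e : R →+* S)) = rootMultiplicity a g :=
  (eq_rootMultiplicity_map e.injective a).symm

theorem Polynomial.roots_map_ringEquiv {R S : Type*} [CommRing R] [IsDomain R] [CommRing S]
    [IsDomain S] (e : R ≃+* S) (g : R[X]) : (g.map (e : R →+* S)).roots = g.roots.map e := by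
  ext b
  obtain ⟨a, rfl⟩ := e.surjective b
  rw [count_roots, rootMultiplicity_map_ringEquiv, Multiset.count_map_eq_count' _ _ e.injective,
    count_roots]

section Duplicant

variable {K L : Type*} [Field K] [Field L]

theorem tol_map_ringEquiv (e : K ≃+* L) (g : K[X]) : tol (g.map (e : K →+* L)) = e (tol g) := by
  unfold tol
  rw [map_mul, map_zpow₀, leadingCoeff_map, natDegree_map, map_prod, roots_map_ringEquiv,
    Multiset.toFinset_map, Finset.sym2_image, Finset.filter_image,
    Finset.prod_image (Sym2.map.injective e.injective).injOn]
  congr 1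
  refine Finset.prod_congr (Finset.filter_congr fun p _ => ?_) fun p _ => ?_
  · simp [Sym2.isDiag_map e.injective]
  · induction p with
    | _ a b => simp [rootMultiplicity_map_ringEquiv]

theorem dupl_map_ringEquiv (e : K ≃+* L) (g : K[X]) :
    dupl (g.map (e : K →+* L)) = e (dupl g) := by
  rw [dupl, dupl, tol_map_ringEquiv, leadingCoeff_map, map_mul, map_pow]
  rfl

theorem algEquiv_apply_dupl_map {k : Type*} [Field k] [Algebra k K] (σ : K ≃ₐ[k] K) (f : k[X]) :
    σ (dupl (f.map (algebraMap k K))) = dupl (f.map (algebraMap k K)) := by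
  calc σ (dupl (f.map (algebraMap k K)))
      = dupl ((f.map (algebraMap k K)).map (σ : K ≃+* K)) :=
        (dupl_map_ringEquiv (σ : K ≃+* K) _).symm
    _ = dupl (f.map (algebraMap k K)) := by
        rw [map_map]
        congr 2
        exact σ.toAlgHom.comp_algebraMap

theorem tol_ne_zero_s8 {g : K[X]} (hg : g ≠ 0) : tol g ≠ 0 := by
  refine mul_ne_zero (zpow_ne_zero _ (leadingCoeff_ne_zero.mpr hg))
    (Finset.prod_ne_zero_iff.mpr fun p hp => ?_)
  induction p with
  | _ a b =>
    rw [Finset.mem_filter, Sym2.mk_isDiag_iff] at hp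
    rw [Sym2.lift_mk]
    exact pow_ne_zero _ (pow_ne_zero 2 (sub_ne_zero.mpr hp.2))

theorem dupl_ne_zero {g : K[X]} (hg : g ≠ 0) : dupl g ≠ 0 :=
  mul_ne_zero (pow_ne_zero 2 (leadingCoeff_ne_zero.mpr hg)) (tol_ne_zero_s8 hg)

end Duplicant

/-- Rationality of the duplicant: for any field `k` and nonzero `f ∈ k[x]`, the duplicant
`dupl f = a_n² · tol f` is the image of a nonzero element of `k`. -/
theorem dupl_rational {k : Type*} [Field k] (f : k[X]) (hf : f ≠ 0) :
    ∃ c : k, c ≠ 0 ∧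
      algebraMap k (AlgebraicClosure k) c = dupl (f.map (algebraMap k (AlgebraicClosure k))) := by
  set F := f.map (algebraMap k (AlgebraicClosure k))
  have hsep : IsSeparable k (dupl F) :=
    mem_separableClosure_iff.mp (dupl_map_mem_separableClosure hf)
  obtain ⟨c, hc⟩ := mem_range_algebraMap_of_isSeparable_of_forall_algEquiv_apply_eq hsep
    (algEquiv_apply_dupl_map · f)
  have hF : F ≠ 0 := (Polynomial.map_ne_zero_iff (algebraMap k _).injective).mpr hf
  exact ⟨c, fun hc0 => dupl_ne_zero hF (by rw [← hc, hc0, map_zero]), hc⟩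
end

section
/- Let k be a field and f = a_n x^n + … + a_0 ∈ k[x] with a_n ≠ 0 and a_0 ≠ 0. Let r_1, …, r_s ∈ k̄ be the distinct roots of f with multiplicities m_1, …, m_s. Then tol(f) = tol(f*) if and only if ∏_{1≤i<j≤s} (r_i r_j)^{2 m_i m_j} = (a_0/a_n)^{2n−2}. -/
/-!
Over `k̄` write `f = a_n ∏ (X - r_i)^{m_i}`. Since `a_0 = a_n ∏ (-r_i)^{m_i} ≠ 0`, all roots
are nonzero and `f* = a_0 ∏ (X - r_i⁻¹)^{m_i}`. Hence
`tol f* = a_0^{2n-2} ∏_{i<j} (r_i⁻¹ - r_j⁻¹)^{2 m_i m_j}`, and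
`(r_i⁻¹ - r_j⁻¹)² = (r_i - r_j)² / (r_i r_j)²`. Comparing with
`tol f = a_n^{2n-2} ∏_{i<j} (r_i - r_j)^{2 m_i m_j}` and cancelling the nonzero product
`∏_{i<j} (r_i - r_j)^{2 m_i m_j}` gives the criterion.
-/

open Polynomial
open scoped Classical

namespace Polynomial

section Reverse

variable {R : Type*} [Semiring R]

@[simps]
noncomputable def reverseMonoidHom [NoZeroDivisors R] : R[X] →* R[X] where
  toFun := reverse
  map_one' := by simpa using reverse_C (1 : R)
  map_mul' := reverse_mul_of_domain

lemma reverse_map {S : Type*} [Semiring S] {φ : R →+* S} (hφ : Function.Injective φ) (p : R[X]) :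
    (p.map φ).reverse = p.reverse.map φ := by
  rw [reverse, reverse, natDegree_map_eq_of_injective hφ, reflect_map]

end Reverse

lemma reverse_X_sub_C {K : Type*} [Field K] {a : K} (ha : a ≠ 0) :
    (X - C a).reverse = C (-a) * (X - C a⁻¹) := by
  rw [sub_eq_add_neg, ← C_neg, reverse_add_C]
  simp only [reverse, natDegree_X, reflect_one_X, pow_one, map_neg, neg_mul, mul_sub, ← C_mul,
    mul_inv_cancel₀ ha, map_one, sub_neg_eq_add]
  ring

end Polynomial

lemma Finset.prod_sym2_filter_not_isDiag_image {α ι M : Type*} [Fintype ι] [LinearOrder ι]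
    [CommMonoid M] {r : ι → α} (hr : Function.Injective r) (g : Sym2 α → M) :
    ∏ p ∈ (univ.image r).sym2.filter (fun p => ¬ p.IsDiag), g p =
      ∏ ij ∈ univ.filter (fun ij : ι × ι => ij.1 < ij.2), g s(r ij.1, r ij.2) := by
  symm
  refine prod_bij (fun ij _ => s(r ij.1, r ij.2)) ?_ ?_ ?_ fun _ _ => rfl
  · rintro ⟨i, j⟩ hij
    simp only [mem_filter, mem_univ, true_and] at hij
    simp [hr.ne hij.ne]
  · rintro ⟨i, j⟩ hij ⟨i', j'⟩ hij' h
    simp only [mem_filter, mem_univ, true_and] at hij hij'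
    dsimp only at h
    rcases Sym2.eq_iff.mp h with ⟨hi, hj⟩ | ⟨hi, hj⟩
    · rw [hr hi, hr hj]
    · exact absurd hij' (by rw [← hr hi, ← hr hj]; exact hij.not_gt)
  · intro p hp
    induction p with
    | _ a b =>
      simp only [mem_filter, mk_mem_sym2_iff, mem_image, mem_univ, true_and,
        Sym2.mk_isDiag_iff] at hp
      obtain ⟨⟨⟨i, rfl⟩, ⟨j, rfl⟩⟩, hne⟩ := hp
      rcases lt_or_gt_of_ne (hr.ne_iff.mp hne) with h | h
      · exact ⟨(i, j), by simpa using h, rfl⟩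
      · exact ⟨(j, i), by simpa using h, Sym2.eq_swap⟩

section Factored

variable {K ι : Type*} [Field K] [Fintype ι] (c : K) (r : ι → K) (m : ι → ℕ)

lemma prod_X_sub_C_pow_ne_zero : ∏ i, (X - C (r i)) ^ m i ≠ 0 :=
  Finset.prod_ne_zero_iff.mpr fun _ _ => pow_ne_zero _ (X_sub_C_ne_zero _)

lemma natDegree_C_mul_prod_X_sub_C_pow {c : K} (hc : c ≠ 0) :
    (C c * ∏ i, (X - C (r i)) ^ m i).natDegree = ∑ i, m i := by
  rw [natDegree_C_mul hc, natDegree_prod _ _ fun i _ => pow_ne_zero _ (X_sub_C_ne_zero _)]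
  simp only [natDegree_pow, natDegree_X_sub_C, mul_one]

lemma leadingCoeff_C_mul_prod_X_sub_C_pow :
    (C c * ∏ i, (X - C (r i)) ^ m i).leadingCoeff = c := by
  rw [leadingCoeff_mul, leadingCoeff_C,
    (monic_prod_of_monic _ _ fun i _ => (monic_X_sub_C _).pow _).leadingCoeff, mul_one]

lemma coeff_zero_C_mul_prod_X_sub_C_pow :
    (C c * ∏ i, (X - C (r i)) ^ m i).coeff 0 = c * ∏ i, (-r i) ^ m i := by
  simp [coeff_zero_eq_eval_zero, eval_prod]

lemma roots_C_mul_prod_X_sub_C_pow {c : K} (hc : c ≠ 0) :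
    (C c * ∏ i, (X - C (r i)) ^ m i).roots = ∑ i, m i • {r i} := by
  rw [roots_C_mul _ hc, roots_prod _ _ (prod_X_sub_C_pow_ne_zero r m)]
  simp only [roots_pow, roots_X_sub_C, Multiset.bind, Finset.sum_eq_multiset_sum, Multiset.join]

lemma rootMultiplicity_C_mul_prod_X_sub_C_pow {c : K} (hc : c ≠ 0) (hr : Function.Injective r)
    (j : ι) : (C c * ∏ i, (X - C (r i)) ^ m i).rootMultiplicity (r j) = m j := by
  classical
  rw [← count_roots, roots_C_mul_prod_X_sub_C_pow r m hc, Multiset.count_sum',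
    Finset.sum_eq_single j (fun i _ hij => by simp [hr.ne hij.symm]) (by simp)]
  simp

lemma roots_toFinset_C_mul_prod_X_sub_C_pow {c : K} (hc : c ≠ 0) (hm : ∀ i, m i ≠ 0) :
    (C c * ∏ i, (X - C (r i)) ^ m i).roots.toFinset = Finset.univ.image r := by
  ext a
  simp [roots_C_mul_prod_X_sub_C_pow r m hc, Multiset.mem_sum, hm, eq_comm]

lemma tol_C_mul_prod_X_sub_C_pow [LinearOrder ι] {c : K} (hc : c ≠ 0) (hr : Function.Injective r)
    (hm : ∀ i, m i ≠ 0) :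
    tol (C c * ∏ i, (X - C (r i)) ^ m i) = c ^ (2 * ((∑ i, m i : ℕ) : ℤ) - 2) *
      ∏ ij ∈ Finset.univ.filter (fun ij : ι × ι => ij.1 < ij.2),
        ((r ij.1 - r ij.2) ^ 2) ^ (m ij.1 * m ij.2) := by
  rw [tol, leadingCoeff_C_mul_prod_X_sub_C_pow, natDegree_C_mul_prod_X_sub_C_pow r m hc,
    roots_toFinset_C_mul_prod_X_sub_C_pow r m hc hm, Finset.prod_sym2_filter_not_isDiag_image hr]
  simp only [Sym2.lift_mk, rootMultiplicity_C_mul_prod_X_sub_C_pow r m hc hr]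

lemma reverse_C_mul_prod_X_sub_C_pow (hr0 : ∀ i, r i ≠ 0) :
    (C c * ∏ i, (X - C (r i)) ^ m i).reverse =
      C (c * ∏ i, (-r i) ^ m i) * ∏ i, (X - C (r i)⁻¹) ^ m i := by
  change reverseMonoidHom _ = _
  simp only [map_mul, map_prod, map_pow, reverseMonoidHom_apply, reverse_C,
    reverse_X_sub_C (hr0 _), mul_pow, Finset.prod_mul_distrib, mul_assoc]

end Factored

lemma prod_inv_sub_inv_sq_pow {K ι : Type*} [Field K] {r : ι → K} (m : ι → ℕ)
    (S : Finset (ι × ι)) (hr0 : ∀ i, r i ≠ 0) :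
    ∏ ij ∈ S, (((r ij.1)⁻¹ - (r ij.2)⁻¹) ^ 2) ^ (m ij.1 * m ij.2) =
      (∏ ij ∈ S, ((r ij.1 - r ij.2) ^ 2) ^ (m ij.1 * m ij.2)) /
        ∏ ij ∈ S, (r ij.1 * r ij.2) ^ (2 * m ij.1 * m ij.2) := by
  rw [← Finset.prod_div_distrib]
  refine Finset.prod_congr rfl fun ij _ => ?_
  have h₁ := hr0 ij.1
  have h₂ := hr0 ij.2
  rw [mul_assoc 2, pow_mul (r ij.1 * r ij.2) 2, ← div_pow]
  congr 1
  field_simp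
  ring

lemma mul_eq_mul_div_iff_eq_div {K : Type*} [Field K] {a b P Q : K} (ha : a ≠ 0) (hP : P ≠ 0)
    (hQ : Q ≠ 0) : a * P = b * (P / Q) ↔ Q = b / a := by
  rw [eq_div_iff ha, mul_div_assoc', eq_div_iff hQ, mul_comm b P, mul_assoc, mul_left_comm,
    mul_right_inj' hP, mul_comm a]

theorem tol_reverse_iff_general {k : Type*} [Field k] (f : k[X]) (h0 : f.coeff 0 ≠ 0)
    (s : ℕ) (r : Fin s → AlgebraicClosure k) (m : Fin s → ℕ)
    (hr : Function.Injective r) (hm : ∀ i, 0 < m i)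
    (hfact : f.map (algebraMap k (AlgebraicClosure k)) =
      C (algebraMap k (AlgebraicClosure k) f.leadingCoeff) * ∏ i, (X - C (r i)) ^ m i) :
    tol (f.map (algebraMap k (AlgebraicClosure k))) =
        tol (f.reverse.map (algebraMap k (AlgebraicClosure k))) ↔
      ∏ ij ∈ Finset.univ.filter (fun ij : Fin s × Fin s => ij.1 < ij.2),
          (r ij.1 * r ij.2) ^ (2 * m ij.1 * m ij.2) =
        (algebraMap k (AlgebraicClosure k) (f.coeff 0) /
            algebraMap k (AlgebraicClosure k) f.leadingCoeff) ^ (2 * (f.natDegree : ℤ) - 2) := by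
  set φ := algebraMap k (AlgebraicClosure k)
  have hm0 i : m i ≠ 0 := (hm i).ne'
  have hcoeff : φ (f.coeff 0) = φ f.leadingCoeff * ∏ i, (-r i) ^ m i := by
    rw [← coeff_map, hfact, coeff_zero_C_mul_prod_X_sub_C_pow]
  have hcoeff0 : φ (f.coeff 0) ≠ 0 := (map_ne_zero φ).mpr h0
  have hlead0 : φ f.leadingCoeff ≠ 0 := left_ne_zero_of_mul (hcoeff ▸ hcoeff0)
  have hr0 i : r i ≠ 0 := neg_ne_zero.mp <| (pow_ne_zero_iff (hm0 i)).mp <|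
    Finset.prod_ne_zero_iff.mp (right_ne_zero_of_mul (hcoeff ▸ hcoeff0)) i (Finset.mem_univ i)
  have hdeg : ∑ i, m i = f.natDegree := by
    rw [← natDegree_map φ, hfact, natDegree_C_mul_prod_X_sub_C_pow r m hlead0]
  have hrev : f.reverse.map φ = C (φ (f.coeff 0)) * ∏ i, (X - C (r i)⁻¹) ^ m i := by
    rw [← reverse_map φ.injective, hfact, reverse_C_mul_prod_X_sub_C_pow _ r m hr0, hcoeff]
  rw [hfact, hrev, tol_C_mul_prod_X_sub_C_pow r m hlead0 hr hm0,
    tol_C_mul_prod_X_sub_C_pow (fun i => (r i)⁻¹) m hcoeff0 (inv_injective.comp hr) hm0,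
    prod_inv_sub_inv_sq_pow m _ hr0, hdeg, mul_eq_mul_div_iff_eq_div (zpow_ne_zero _ hlead0)
      (Finset.prod_ne_zero_iff.mpr fun ij hij => ?_) (Finset.prod_ne_zero_iff.mpr fun ij _ => ?_),
    div_zpow]
  · exact pow_ne_zero _ (pow_ne_zero _ (sub_ne_zero.mpr (hr.ne (Finset.mem_filter.mp hij).2.ne)))
  · exact pow_ne_zero _ (mul_ne_zero (hr0 _) (hr0 _))

/-- Inversion criterion: for `f = a_n x^n + … + a_0` with `a_n, a_0 ≠ 0`, with distinct roots
`r_1, …, r_s` of multiplicities `m_1, …, m_s` in the algebraic closure, one has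
`tol f = tol f*` (where `f* = x^{deg f} f(1/x)` is the reciprocal polynomial, i.e. `f.reverse`)
if and only if `∏_{i<j} (r_i r_j)^{2 m_i m_j} = (a_0 / a_n)^{2n-2}`. -/
theorem tol_reverse_iff {k : Type*} [Field k] (f : k[X]) (hf : f ≠ 0) (h0 : f.coeff 0 ≠ 0)
    (s : ℕ) (r : Fin s → AlgebraicClosure k) (m : Fin s → ℕ)
    (hr : Function.Injective r) (hm : ∀ i, 0 < m i)
    (hfact : f.map (algebraMap k (AlgebraicClosure k)) =
      C (algebraMap k (AlgebraicClosure k) f.leadingCoeff) * ∏ i, (X - C (r i)) ^ m i) :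
    tol (f.map (algebraMap k (AlgebraicClosure k))) =
        tol (f.reverse.map (algebraMap k (AlgebraicClosure k))) ↔
      ∏ ij ∈ Finset.univ.filter (fun ij : Fin s × Fin s => ij.1 < ij.2),
          (r ij.1 * r ij.2) ^ (2 * m ij.1 * m ij.2) =
        (algebraMap k (AlgebraicClosure k) (f.coeff 0) /
            algebraMap k (AlgebraicClosure k) f.leadingCoeff) ^ (2 * (f.natDegree : ℤ) - 2) :=
  tol_reverse_iff_general f h0 s r m hr hm hfact
end

section
/- A power of a separable polynomial need not have inversion-invariant tolerant: over k = ℚ, the polynomial f(x) = (x−1)²(x−2)², which is the square of the separable polynomial (x−1)(x−2), satisfies f(0) ≠ 0, tol(f) = 1, and tol(f*) = 16, so tol(f) ≠ tol(f*). -/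
/-!
Over any field, `c (X - a)^m (X - b)^n` with `a ≠ b` has tolerant
`c^(2(m+n)-2) (a - b)^(2mn)`. Over `ℚ̄`, `f = (X - 1)^2 (X - 2)^2` gives `c = 1` and
`(1 - 2)^8 = 1`.
Since the reverse of `X - a` is `-a (X - a⁻¹)`, `f* = 4 (X - 1)^2 (X - 1/2)^2`, whose tolerant is
`4^6 (1/2)^8 = 16`.
-/

open Polynomial
open scoped Classical

theorem Finset.sym2_filter_not_isDiag_pair {α : Type*} [DecidableEq α] {a b : α}
    (hab : a ≠ b) :
    ({a, b} : Finset α).sym2.filter (fun p => ¬ p.IsDiag) = {s(a, b)} := by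
  ext p
  induction p using Sym2.ind with
  | _ x y =>
    simp only [Finset.mem_filter, Finset.mk_mem_sym2_iff, Finset.mem_insert,
      Finset.mem_singleton, Sym2.mk_isDiag_iff, Sym2.eq_iff]
    aesop

namespace Polynomial

theorem reverse_X_sub_C_of_ne_zero {K : Type*} [Field K] {a : K} (ha : a ≠ 0) :
    reverse (X - C a) = C (-a) * (X - C a⁻¹) := by
  have hX : reverse (X : K[X]) = 1 := by
    rw [← mul_one X, reverse_X_mul, ← C_1, reverse_C]
  rw [sub_eq_add_neg, ← C_neg, reverse_add_C, natDegree_X, hX, mul_sub, ← C_mul,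
    neg_mul, mul_inv_cancel₀ ha]
  simp [add_comm]

theorem reverse_map_of_injective {R S : Type*} [Semiring R] [Semiring S] {f : R →+* S}
    (hf : Function.Injective f) (p : R[X]) : (p.map f).reverse = p.reverse.map f := by
  rw [reverse, reverse, natDegree_map_eq_of_injective hf, reflect_map]

end Polynomial

theorem tol_C_mul_X_sub_C_pow_mul_X_sub_C_pow {K : Type*} [Field K] {a b c : K} (hab : a ≠ b)
    (hc : c ≠ 0) {m n : ℕ} (hm : m ≠ 0) (hn : n ≠ 0) :
    tol (C c * (X - C a) ^ m * (X - C b) ^ n) =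
      c ^ (2 * (m + n : ℤ) - 2) * ((a - b) ^ 2) ^ (m * n) := by
  set f : K[X] := C c * (X - C a) ^ m * (X - C b) ^ n
  have hroots : f.roots = m • {a} + n • {b} := by
    simp [f, roots_mul, hc, X_sub_C_ne_zero]
  have hlc : f.leadingCoeff = c := by simp [f]
  have hdeg : f.natDegree = m + n := by
    simp [f, natDegree_mul, hc, X_sub_C_ne_zero]
  have hsupp : f.roots.toFinset = {a, b} := by
    ext x; simp [hroots, hm, hn]
  have hma : f.rootMultiplicity a = m := by
    rw [← count_roots, hroots]; simp [hab]
  have hmb : f.rootMultiplicity b = n := by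
    rw [← count_roots, hroots]; simp [hab.symm]
  rw [tol, hlc, hdeg, hsupp, Finset.sym2_filter_not_isDiag_pair hab, Finset.prod_singleton,
    Sym2.lift_mk]
  simp [hma, hmb]

/-- A power of a separable polynomial need not have inversion-invariant tolerant: over `ℚ`,
`f = ((x-1)(x-2))² = (x-1)²(x-2)²` is the square of the separable polynomial `(x-1)(x-2)`,
satisfies `f(0) ≠ 0`, `tol f = 1` and `tol f* = 16`, so `tol f ≠ tol f*`
(where `f* = f.reverse` is the reciprocal polynomial). -/
theorem tol_sq_not_inversion_invariant :
    ((X - C 1) * (X - C 2) : ℚ[X]).Separable ∧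
      ((((X - C 1) * (X - C 2)) ^ 2 : ℚ[X]).eval 0 ≠ 0) ∧
      tol (((((X - C 1) * (X - C 2)) ^ 2 : ℚ[X])).map (algebraMap ℚ (AlgebraicClosure ℚ))) = 1 ∧
      tol (((((X - C 1) * (X - C 2)) ^ 2 : ℚ[X])).reverse.map
        (algebraMap ℚ (AlgebraicClosure ℚ))) = 16 ∧
      tol (((((X - C 1) * (X - C 2)) ^ 2 : ℚ[X])).map (algebraMap ℚ (AlgebraicClosure ℚ))) ≠
        tol (((((X - C 1) * (X - C 2)) ^ 2 : ℚ[X])).reverse.map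
          (algebraMap ℚ (AlgebraicClosure ℚ))) := by
  set K := AlgebraicClosure ℚ
  have hmap : (((X - C 1) * (X - C 2)) ^ 2 : ℚ[X]).map (algebraMap ℚ K) =
      ((X - C 1) * (X - C 2)) ^ 2 := by
    simp
  have htol : tol ((((X - C 1) * (X - C 2)) ^ 2 : ℚ[X]).map (algebraMap ℚ K)) = 1 := by
    rw [hmap, mul_pow, ← one_mul ((X - C 1 : K[X]) ^ 2), ← C_1,
      tol_C_mul_X_sub_C_pow_mul_X_sub_C_pow (by norm_num) one_ne_zero two_ne_zero two_ne_zero]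
    norm_num
  have hrev : (((X - C 1) * (X - C 2)) ^ 2 : ℚ[X]).reverse.map (algebraMap ℚ K) =
      C 4 * (X - C 1) ^ 2 * (X - C 2⁻¹) ^ 2 := by
    rw [← reverse_map_of_injective (algebraMap ℚ K).injective, hmap, sq, reverse_mul_of_domain,
      reverse_mul_of_domain, reverse_X_sub_C_of_ne_zero one_ne_zero,
      reverse_X_sub_C_of_ne_zero two_ne_zero, inv_one, C_neg, C_neg, C_1,
      show (C 4 : K[X]) = C 2 * C 2 by rw [← C_mul]; norm_num]
    ring
  have htol_rev :
      tol ((((X - C 1) * (X - C 2)) ^ 2 : ℚ[X]).reverse.map (algebraMap ℚ K)) = 16 := by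
    rw [hrev, tol_C_mul_X_sub_C_pow_mul_X_sub_C_pow (by norm_num) (by norm_num) two_ne_zero
      two_ne_zero]
    norm_num
  refine ⟨?_, by norm_num, htol, htol_rev, by rw [htol, htol_rev]; norm_num⟩
  exact separable_X_sub_C.mul separable_X_sub_C (isCoprime_X_sub_C_of_isUnit_sub (by norm_num))
end
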